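/- Suppose η : [0,∞) → ℝ is continuously differentiable with both η and η̇ bounded, and φ : [0,T) → ℝ is a solution of φ̇ = 1/(η + φ) - k_c φ with η(0) + φ(0) > 0. Then η(t) + φ(t) does not converge to 0 as t → T; in fact there exists ε > 0 with η(t) + φ(t) ≥ ε for all t ∈ [0,T). -/

import Mathlib

/-!
The sum `u = η + φ` satisfies `u̇ = η̇ + 1/u - k_c (u - η)`. Since `η` and `η̇` are bounded, at any
time where `u` equals a small enough level `ε > 0` the term `1/ε` dominates and `u̇ > 0`, so `u`,
which starts above `ε`, can never cross below it.
-/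

open Set Filter Topology

theorem le_of_hasDerivAt_of_deriv_pos_of_eq {u u' : ℝ → ℝ} {a b δ : ℝ}
    (hu : ∀ t ∈ Ico a b, HasDerivAt u (u' t) t) (ha : δ ≤ u a)
    (hpos : ∀ t ∈ Ico a b, u t = δ → 0 < u' t) : ∀ t ∈ Ico a b, δ ≤ u t := by
  intro t ht
  have hsub : Icc a t ⊆ Ico a b := Icc_subset_Ico_right ht.2
  exact image_le_of_deriv_right_lt_deriv_boundary' continuousOn_const
    (fun _ _ => hasDerivWithinAt_const _ _ δ) ha
    (fun x hx => (hu x (hsub hx)).continuousAt.continuousWithinAt)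
    (fun x hx => (hu x (hsub (Ico_subset_Icc_self hx))).hasDerivWithinAt)
    (fun x hx hx' => hpos x (hsub (Ico_subset_Icc_self hx)) hx'.symm) ⟨ht.1, le_rfl⟩

theorem add_one_div_sub_mul_pos {k a a' x δ C C' : ℝ} (ha : |a| ≤ C) (ha' : |a'| ≤ C')
    (hδ : 0 < δ) (hδ1 : δ ≤ 1) (hδK : C' + |k| * (1 + C) < 1 / δ) (hx : a + x = δ) :
    0 < a' + (1 / (a + x) - k * x) := by
  have hx_le : |x| ≤ 1 + C :=
    calc |x| = |δ - a| := by rw [← hx, add_sub_cancel_left]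
      _ ≤ |δ| + |a| := abs_sub _ _
      _ ≤ 1 + C := by rw [abs_of_pos hδ]; linarith
  have hkx : k * x ≤ |k| * (1 + C) :=
    calc k * x ≤ |k * x| := le_abs_self _
      _ = |k| * |x| := abs_mul _ _
      _ ≤ |k| * (1 + C) := by gcongr
  rw [hx]
  linarith [neg_abs_le a']

theorem mode_II_no_singularity_general (kc T : ℝ)
    (η φ : ℝ → ℝ)
    (hη : ContDiff ℝ 1 η)
    (hηb : ∃ C : ℝ, ∀ t : ℝ, 0 ≤ t → |η t| ≤ C)
    (hηdb : ∃ C : ℝ, ∀ t : ℝ, 0 ≤ t → |deriv η t| ≤ C)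
    (hφ : ∀ t ∈ Set.Ico (0 : ℝ) T,
      HasDerivAt φ (1 / (η t + φ t) - kc * φ t) t)
    (h0 : 0 < η 0 + φ 0) :
    ∃ ε : ℝ, 0 < ε ∧ ∀ t ∈ Set.Ico (0 : ℝ) T, ε ≤ η t + φ t := by
  obtain ⟨C, hC⟩ := hηb
  obtain ⟨C', hC'⟩ := hηdb
  obtain ⟨ε, ⟨hεK, hε0, hε1⟩, hεpos⟩ :
      ∃ ε, (C' + |kc| * (1 + C) < ε⁻¹ ∧ ε < η 0 + φ 0 ∧ ε ≤ 1) ∧ 0 < ε :=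
    ((tendsto_inv_nhdsGT_zero.eventually (eventually_gt_atTop _)).and
      (nhdsWithin_le_nhds ((eventually_lt_nhds h0).and (eventually_le_nhds one_pos)))
      |>.and self_mem_nhdsWithin).exists
  refine ⟨ε, hεpos, le_of_hasDerivAt_of_deriv_pos_of_eq
    (fun t ht => (hη.differentiable one_ne_zero t).hasDerivAt.add (hφ t ht)) hε0.le ?_⟩
  intro t ht hεt
  exact add_one_div_sub_mul_pos (hC t ht.1) (hC' t ht.1) hεpos hε1 (by rwa [one_div]) hεt

/-- Mode II: if η is C¹ with η and η̇ bounded, and φ solves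
φ̇ = 1/(η + φ) - k_c φ on [0,T) with η(0) + φ(0) > 0, then η + φ stays
bounded away from 0 on [0,T). -/
theorem mode_II_no_singularity (kc T : ℝ) (hkc : 0 < kc) (hT : 0 < T)
    (η φ : ℝ → ℝ)
    (hη : ContDiff ℝ 1 η)
    (hηb : ∃ C : ℝ, ∀ t : ℝ, 0 ≤ t → |η t| ≤ C)
    (hηdb : ∃ C : ℝ, ∀ t : ℝ, 0 ≤ t → |deriv η t| ≤ C)
    (hφ : ∀ t ∈ Set.Ico (0 : ℝ) T,
      HasDerivAt φ (1 / (η t + φ t) - kc * φ t) t)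
    (h0 : 0 < η 0 + φ 0) :
    ∃ ε : ℝ, 0 < ε ∧ ∀ t ∈ Set.Ico (0 : ℝ) T, ε ≤ η t + φ t :=
  mode_II_no_singularity_general kc T η φ hη hηb hηdb hφ h0
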